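/- In the kite graph P_k · K_{n−k+1} (with k ≥ 2, n − k + 1 ≥ 3), the minimum entry of the principal eigenvector is attained at the degree-1 endpoint of the path, and the maximum entry is attained at the vertex of the clique identified with the path endpoint (the vertex of maximum degree n − k + 1). -/

import Mathlib

/-!
Write `r` for the root, the vertex shared by the path and the clique. The other clique
vertices are closed twins, so (as `λ > 0`) they share one entry `c`. Subtracting the
eigen-equation at a twin from the one at `r` gives `(λ + 1)(v r - c) = v (r - 1) > 0`, so
`c < v r`, and the clique equation `(λ + 1) c = v r + (s - 1) c > 3c` then gives `λ > 2`.
Along the path `λ xᵢ = xᵢ₋₁ + xᵢ₊₁` (and `λ x₀ = x₁`); for `λ ≥ 2` such a nonnegative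
sequence is nondecreasing, so the path entries increase from the endpoint to `r`. Finally
`λ v₀ = v₁ ≤ v r ≤ λ c`, so the endpoint entry lies below `c` as well.
-/

open Finset Matrix

/-- The kite (lollipop) graph P_k · K_s on k + s − 1 vertices: vertices 0, …, k−1 form a
path, and vertices k−1, …, k+s−2 form a clique. -/
def kiteGraph (k s : ℕ) : SimpleGraph (Fin (k + s - 1)) where
  Adj a b := a ≠ b ∧
    ((a : ℕ) + 1 = b ∨ (b : ℕ) + 1 = a ∨ (k - 1 ≤ (a : ℕ) ∧ k - 1 ≤ (b : ℕ)))
  symm := by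
    constructor
    rintro a b ⟨hab, h⟩
    exact ⟨hab.symm, by tauto⟩
  loopless := by constructor; rintro a ⟨hab, -⟩; exact hab rfl

instance (k s : ℕ) : DecidableRel (kiteGraph k s).Adj := fun a b => by
  unfold kiteGraph; infer_instance

namespace SimpleGraph

variable {V α : Type*} [Fintype V] (G : SimpleGraph V) [DecidableRel G.Adj]

theorem sum_neighborFinset_of_adjMatrix_mulVec_eq_smul [NonAssocSemiring α] {lam : α}
    {v : V → α} (h : G.adjMatrix α *ᵥ v = lam • v) (x : V) :
    ∑ y ∈ G.neighborFinset x, v y = lam * v x := by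
  simpa [adjMatrix_mulVec_apply] using congrFun h x

theorem sum_insert_neighborFinset_of_adjMatrix_mulVec_eq_smul [DecidableEq V]
    [NonAssocSemiring α] {lam : α} {v : V → α} (h : G.adjMatrix α *ᵥ v = lam • v) (x : V) :
    ∑ y ∈ insert x (G.neighborFinset x), v y = (lam + 1) * v x := by
  rw [sum_insert (by simp), G.sum_neighborFinset_of_adjMatrix_mulVec_eq_smul h, add_mul,
    one_mul, add_comm]

theorem eq_of_insert_neighborFinset_eq [DecidableEq V] [Ring α] [NoZeroDivisors α] {lam : α}
    {v : V → α} (h : G.adjMatrix α *ᵥ v = lam • v) (hlam : lam + 1 ≠ 0) {x y : V}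
    (hxy : insert x (G.neighborFinset x) = insert y (G.neighborFinset y)) : v x = v y := by
  have hsum := G.sum_insert_neighborFinset_of_adjMatrix_mulVec_eq_smul h x
  rw [hxy, G.sum_insert_neighborFinset_of_adjMatrix_mulVec_eq_smul h y] at hsum
  exact mul_left_cancel₀ hlam hsum.symm

theorem pos_of_adjMatrix_mulVec_eq_smul [Semiring α] [LinearOrder α] [IsStrictOrderedRing α]
    {lam : α} {v : V → α} (hv : ∀ x, 0 < v x) (h : G.adjMatrix α *ᵥ v = lam • v) {x y : V}
    (hxy : G.Adj x y) : 0 < lam := by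
  have hsum : 0 < ∑ z ∈ G.neighborFinset x, v z :=
    sum_pos (fun z _ => hv z) ⟨y, (G.mem_neighborFinset x y).2 hxy⟩
  rw [G.sum_neighborFinset_of_adjMatrix_mulVec_eq_smul h] at hsum
  exact pos_of_mul_pos_left hsum (hv x).le

end SimpleGraph

theorem monotoneOn_Iic_of_three_term_recurrence {α : Type*} [CommRing α] [LinearOrder α]
    [IsStrictOrderedRing α] {x : ℕ → α} {lam : α} {N : ℕ}
    (hlam : 2 ≤ lam) (hx : ∀ m ≤ N, 0 ≤ x m) (h0 : lam * x 0 = x 1)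
    (hrec : ∀ m, m + 2 ≤ N → lam * x (m + 1) = x m + x (m + 2)) :
    MonotoneOn x (Set.Iic N) := by
  have step : ∀ m, m + 1 ≤ N → x m ≤ x (m + 1) := by
    intro m
    induction m with
    | zero =>
      intro h
      have hpos : 0 ≤ (lam - 1) * x 0 := mul_nonneg (by linarith) (hx 0 (by omega))
      linarith
    | succ m ih =>
      intro h
      -- `x (m+2) - x (m+1) = (λ - 2) x (m+1) + (x (m+1) - x m)`
      have hpos : 0 ≤ (lam - 2) * x (m + 1) := mul_nonneg (by linarith) (hx (m + 1) (by omega))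
      linarith [hrec m h, ih (by omega)]
  refine monotoneOn_of_le_succ Set.ordConnected_Iic fun m _ _ hm => ?_
  rw [Order.succ_eq_add_one] at hm ⊢
  exact step m hm

namespace kiteGraph

variable {k s : ℕ}

theorem adj_iff {a b : Fin (k + s - 1)} :
    (kiteGraph k s).Adj a b ↔ (a : ℕ) ≠ b ∧
      ((a : ℕ) + 1 = b ∨ (b : ℕ) + 1 = a ∨ (k - 1 ≤ (a : ℕ) ∧ k - 1 ≤ (b : ℕ))) := by
  rw [← Fin.ne_iff_vne]
  rfl

def clique (k s : ℕ) : Finset (Fin (k + s - 1)) := {a | k - 1 ≤ (a : ℕ)}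

def path (k s : ℕ) : Set (Fin (k + s - 1)) := {a | (a : ℕ) < k}

theorem neighborFinset_eq_singleton (hk : 2 ≤ k) {a b : Fin (k + s - 1)} (ha : (a : ℕ) = 0)
    (hb : (b : ℕ) = 1) : (kiteGraph k s).neighborFinset a = {b} := by
  ext c
  simp only [SimpleGraph.mem_neighborFinset, adj_iff, mem_singleton, Fin.ext_iff]
  omega

theorem neighborFinset_eq_pair {a b c : Fin (k + s - 1)} (hab : (a : ℕ) + 1 = b)
    (hbc : (b : ℕ) + 1 = c) (hc : (c : ℕ) < k) :
    (kiteGraph k s).neighborFinset b = {a, c} := by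
  ext d
  simp only [SimpleGraph.mem_neighborFinset, adj_iff, mem_insert, mem_singleton, Fin.ext_iff]
  omega

theorem insert_neighborFinset_eq_clique {a : Fin (k + s - 1)} (ha : k ≤ (a : ℕ)) :
    insert a ((kiteGraph k s).neighborFinset a) = clique k s := by
  ext b
  simp only [clique, SimpleGraph.mem_neighborFinset, adj_iff, mem_insert, mem_filter, mem_univ,
    true_and, Fin.ext_iff]
  omega

theorem neighborFinset_eq_insert_erase_clique {p r : Fin (k + s - 1)} (hpr : (p : ℕ) + 1 = r)
    (hr : (r : ℕ) + 1 = k) :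
    (kiteGraph k s).neighborFinset r = insert p ((clique k s).erase r) := by
  ext b
  simp only [clique, SimpleGraph.mem_neighborFinset, adj_iff, mem_insert, mem_erase, mem_filter,
    mem_univ, true_and, Fin.ext_iff]
  omega

variable {lam : ℝ} {v : Fin (k + s - 1) → ℝ}

theorem eigenvector_clique_eq (heig : (kiteGraph k s).adjMatrix ℝ *ᵥ v = lam • v)
    (hlam : 0 < lam) {a b : Fin (k + s - 1)} (ha : k ≤ (a : ℕ)) (hb : k ≤ (b : ℕ)) :
    v a = v b :=
  SimpleGraph.eq_of_insert_neighborFinset_eq _ heig (by linarith) <| by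
    rw [insert_neighborFinset_eq_clique ha, insert_neighborFinset_eq_clique hb]

theorem eigenvector_clique_lt_root (hk : 2 ≤ k) (hv : ∀ x, 0 < v x)
    (heig : (kiteGraph k s).adjMatrix ℝ *ᵥ v = lam • v) (hlam : 0 < lam)
    {a r : Fin (k + s - 1)} (ha : k ≤ (a : ℕ)) (hr : (r : ℕ) + 1 = k) : v a < v r := by
  set p : Fin (k + s - 1) := ⟨k - 2, by omega⟩
  have hroot := SimpleGraph.sum_neighborFinset_of_adjMatrix_mulVec_eq_smul _ heig r
  rw [neighborFinset_eq_insert_erase_clique (p := p) (by simp [p]; omega) hr,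
    sum_insert (by simp [p, clique, Fin.ext_iff]; omega),
    sum_erase_eq_sub (by simp [clique]; omega)] at hroot
  have hclique := SimpleGraph.sum_insert_neighborFinset_of_adjMatrix_mulVec_eq_smul _ heig a
  rw [insert_neighborFinset_eq_clique ha] at hclique
  have key : (lam + 1) * (v r - v a) = v p := by linear_combination hclique - hroot
  exact sub_pos.1 (pos_of_mul_pos_right (key ▸ hv p) (by linarith))

theorem two_lt_eigenvalue (hk : 2 ≤ k) (hs : 3 ≤ s) (hv : ∀ x, 0 < v x)
    (heig : (kiteGraph k s).adjMatrix ℝ *ᵥ v = lam • v) (hlam : 0 < lam) : 2 < lam := by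
  set r : Fin (k + s - 1) := ⟨k - 1, by omega⟩
  set a : Fin (k + s - 1) := ⟨k, by omega⟩
  set b : Fin (k + s - 1) := ⟨k + 1, by omega⟩
  have ha : k ≤ (a : ℕ) := le_rfl
  have hb : k ≤ (b : ℕ) := k.le_succ
  have hsub : ({r, a, b} : Finset (Fin (k + s - 1))) ⊆ clique k s := by
    intro x
    simp only [mem_insert, mem_singleton, clique, mem_filter, mem_univ, true_and, Fin.ext_iff,
      r, a, b]
    omega
  have hle := sum_le_sum_of_subset_of_nonneg hsub fun x _ _ => (hv x).le
  rw [sum_insert (by simp [r, a, b, Fin.ext_iff]; omega), sum_pair (by simp [a, b, Fin.ext_iff]),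
    ← insert_neighborFinset_eq_clique ha,
    SimpleGraph.sum_insert_neighborFinset_of_adjMatrix_mulVec_eq_smul _ heig,
    eigenvector_clique_eq heig hlam hb ha] at hle
  have hroot := eigenvector_clique_lt_root hk hv heig hlam ha (r := r) (by simp [r]; omega)
  exact lt_of_mul_lt_mul_right (by linarith) (hv a).le

theorem eigenvector_monotoneOn_path (hk : 2 ≤ k) (hs : 1 ≤ s) (hv : ∀ x, 0 < v x)
    (heig : (kiteGraph k s).adjMatrix ℝ *ᵥ v = lam • v) (hlam : 2 ≤ lam) :
    MonotoneOn v (path k s) := by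
  set x : ℕ → ℝ := Function.extend Fin.val v 0
  have hx : ∀ a : Fin (k + s - 1), x a = v a := Fin.val_injective.extend_apply v 0
  have hxv : ∀ m (hm : m < k + s - 1), x m = v ⟨m, hm⟩ := fun m hm => hx ⟨m, hm⟩
  have hxm : MonotoneOn x (Set.Iic (k - 1)) := by
    refine monotoneOn_Iic_of_three_term_recurrence hlam (fun m hm => ?_) ?_ (fun m hm => ?_)
    · rw [hxv m (by omega)]
      exact (hv _).le
    · have h0 := SimpleGraph.sum_neighborFinset_of_adjMatrix_mulVec_eq_smul _ heig ⟨0, by omega⟩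
      rw [neighborFinset_eq_singleton hk rfl (b := ⟨1, by omega⟩) rfl, sum_singleton] at h0
      rw [hxv 0 (by omega), hxv 1 (by omega), h0]
    · have hm1 := SimpleGraph.sum_neighborFinset_of_adjMatrix_mulVec_eq_smul _ heig
        ⟨m + 1, by omega⟩
      rw [neighborFinset_eq_pair (a := ⟨m, by omega⟩) (c := ⟨m + 2, by omega⟩) rfl rfl
        (by simp; omega), sum_pair (by simp [Fin.ext_iff])] at hm1
      rw [hxv m (by omega), hxv (m + 1) (by omega), hxv (m + 2) (by omega), hm1]
  intro a ha b hb hab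
  rw [← hx a, ← hx b]
  simp only [path, Set.mem_ofPred_eq] at ha hb
  exact hxm (by simp; omega) (by simp; omega) hab

theorem eigenvector_endpoint_le_clique (hk : 2 ≤ k) (hv : ∀ x, 0 < v x)
    (heig : (kiteGraph k s).adjMatrix ℝ *ᵥ v = lam • v) (hlam : 0 < lam)
    (hmono : MonotoneOn v (path k s)) {o a : Fin (k + s - 1)} (ho : (o : ℕ) = 0)
    (ha : k ≤ (a : ℕ)) : v o ≤ v a := by
  set one : Fin (k + s - 1) := ⟨1, by omega⟩
  set r : Fin (k + s - 1) := ⟨k - 1, by omega⟩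
  have h0 := SimpleGraph.sum_neighborFinset_of_adjMatrix_mulVec_eq_smul _ heig o
  rw [neighborFinset_eq_singleton hk ho (b := one) rfl, sum_singleton] at h0
  have hpath : v one ≤ v r := hmono (by simp [path, one]; omega) (by simp [path, r]; omega)
    (by simp [one, r, Fin.le_def]; omega)
  have hsub : ({r, a} : Finset (Fin (k + s - 1))) ⊆ clique k s := by
    intro x
    simp only [mem_insert, mem_singleton, clique, mem_filter, mem_univ, true_and, Fin.ext_iff,
      r]
    omega
  have hle := sum_le_sum_of_subset_of_nonneg hsub fun x _ _ => (hv x).le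
  rw [sum_pair (by simp [r, Fin.ext_iff]; omega), ← insert_neighborFinset_eq_clique ha,
    SimpleGraph.sum_insert_neighborFinset_of_adjMatrix_mulVec_eq_smul _ heig] at hle
  exact le_of_mul_le_mul_left (by linarith) hlam

end kiteGraph

/-- In the kite graph P_k · K_{s} (k ≥ 2, s ≥ 3), the minimum entry of the positive
principal eigenvector is attained at the degree-1 endpoint of the path (vertex 0), and
the maximum entry at the clique vertex identified with the path endpoint (vertex k−1). -/
theorem kite_min_max_entries (k s : ℕ) (hk : 2 ≤ k) (hs : 3 ≤ s)
    (lam : ℝ) (v : Fin (k + s - 1) → ℝ) (hv : ∀ x, 0 < v x)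
    (heig : (kiteGraph k s).adjMatrix ℝ *ᵥ v = lam • v) :
    (∀ y, v ⟨0, by omega⟩ ≤ v y) ∧ (∀ y, v y ≤ v ⟨k - 1, by omega⟩) := by
  have hlam : 0 < lam := (kiteGraph k s).pos_of_adjMatrix_mulVec_eq_smul hv heig
    (x := ⟨0, by omega⟩) (y := ⟨1, by omega⟩) (kiteGraph.adj_iff.2 (by simp))
  have hmono := kiteGraph.eigenvector_monotoneOn_path hk (by omega) hv heig
    (kiteGraph.two_lt_eigenvalue hk hs hv heig hlam).le
  refine ⟨fun y => ?_, fun y => ?_⟩ <;> rcases lt_or_ge (y : ℕ) k with hy | hy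
  · exact hmono (by simp [kiteGraph.path]; omega) hy (by simp [Fin.le_def])
  · exact kiteGraph.eigenvector_endpoint_le_clique hk hv heig hlam hmono rfl hy
  · exact hmono hy (by simp [kiteGraph.path]; omega) (by simp [Fin.le_def]; omega)
  · exact (kiteGraph.eigenvector_clique_lt_root hk hv heig hlam hy (by simp; omega)).le
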